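/- Equi-tuning preserves uniform approximation of equivariant targets: let K ⊆ X be a set that is G-invariant (g • x ∈ K for all g ∈ G, x ∈ K), let e : X → Y be G-equivariant, let ε > 0, and suppose f : X → Y satisfies ‖e(x) − f(x)‖ ≤ ε for all x ∈ K. Then the equi-tuned model f_G(x) = (1/|G|) ∑_{g ∈ G} g⁻¹ • f(g • x) satisfies ‖e(x) − f_G(x)‖ ≤ ε for all x ∈ K; hence if the pretrained model class is a universal approximator of all functions, the equi-tuned class is a universal approximator of all G-equivariant functions. -/

import Mathlib

/-! Averaging over `G` fixes the equivariant target `e`, so `e - f_G` is the average of the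
transported errors `g⁻¹ • (e - f) (g • x)`. Each of these has norm at most `ε`, because `K` is
`G`-invariant and `G` acts by isometries, and an average of vectors of norm at most `ε` has norm
at most `ε`. -/

section Equitune

variable (G : Type*) {X Y : Type*} [Group G] [Fintype G] [MulAction G X]

def equitune (𝕜 : Type*) [DivisionRing 𝕜] [AddCommGroup Y] [Module 𝕜 Y] [DistribMulAction G Y]
    (f : X → Y) (x : X) : Y :=
  (Fintype.card G : 𝕜)⁻¹ • ∑ g : G, g⁻¹ • f (g • x)

theorem equitune_sub (𝕜 : Type*) [DivisionRing 𝕜] [AddCommGroup Y] [Module 𝕜 Y]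
    [DistribMulAction G Y] (e f : X → Y) (x : X) :
    equitune G 𝕜 (e - f) x = equitune G 𝕜 e x - equitune G 𝕜 f x := by
  simp only [equitune, Pi.sub_apply, smul_sub, Finset.sum_sub_distrib]

variable {G}

theorem equitune_eq_self_of_equivariant (𝕜 : Type*) [DivisionRing 𝕜] [CharZero 𝕜]
    [AddCommGroup Y] [Module 𝕜 Y] [DistribMulAction G Y] {e : X → Y}
    (he : ∀ (g : G) (x : X), e (g • x) = g • e x) (x : X) :
    equitune G 𝕜 e x = e x := by
  have hterm : ∀ g : G, g⁻¹ • e (g • x) = e x := fun g => by rw [he, inv_smul_smul]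
  have hcard : (Fintype.card G : 𝕜) ≠ 0 := Nat.cast_ne_zero.mpr Fintype.card_ne_zero
  simp only [equitune, hterm, Finset.sum_const, Finset.card_univ, ← Nat.cast_smul_eq_nsmul 𝕜,
    smul_smul, inv_mul_cancel₀ hcard, one_smul]

theorem norm_equitune_le [NormedAddCommGroup Y] [NormedSpace ℝ Y] [DistribMulAction G Y]
    (hiso : ∀ (g : G) (y : Y), ‖g • y‖ ≤ ‖y‖) {f : X → Y} {x : X} {C : ℝ}
    (hf : ∀ g : G, ‖f (g • x)‖ ≤ C) :
    ‖equitune G ℝ f x‖ ≤ C := by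
  have hcard : (0 : ℝ) < Fintype.card G := Nat.cast_pos.mpr Fintype.card_pos
  calc ‖equitune G ℝ f x‖
      ≤ (Fintype.card G : ℝ)⁻¹ * ∑ g : G, ‖g⁻¹ • f (g • x)‖ := by
        rw [equitune, norm_smul, Real.norm_of_nonneg (inv_nonneg.mpr hcard.le)]
        gcongr
        exact norm_sum_le _ _
    _ ≤ (Fintype.card G : ℝ)⁻¹ * ∑ _g : G, C := by
        gcongr with g
        exact (hiso _ _).trans (hf g)
    _ = C := by
        rw [Finset.sum_const, Finset.card_univ, nsmul_eq_mul, inv_mul_cancel_left₀ hcard.ne']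

end Equitune

theorem equitune_preserves_approximation_general {G X Y : Type*} [Group G] [Fintype G]
    [MulAction G X] [NormedAddCommGroup Y] [InnerProductSpace ℝ Y]
    [DistribMulAction G Y]
    (hiso : ∀ (g : G) (y : Y), ‖g • y‖ = ‖y‖)
    (K : Set X) (hK : ∀ (g : G), ∀ x ∈ K, g • x ∈ K)
    (e : X → Y) (he : ∀ (g : G) (x : X), e (g • x) = g • e x)
    (ε : ℝ)
    (f : X → Y) (hf : ∀ x ∈ K, ‖e x - f x‖ ≤ ε) :
    ∀ x ∈ K, ‖e x - ((Fintype.card G : ℝ))⁻¹ • ∑ g : G, g⁻¹ • f (g • x)‖ ≤ ε := by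
  intro x hx
  calc ‖e x - equitune G ℝ f x‖
      = ‖equitune G ℝ (e - f) x‖ := by
        rw [equitune_sub G, equitune_eq_self_of_equivariant ℝ he]
    _ ≤ ε := norm_equitune_le (fun g y => (hiso g y).le) fun g => hf _ (hK g x hx)

/-- Equi-tuning preserves uniform approximation of equivariant targets: if `f`
uniformly `ε`-approximates a `G`-equivariant target `e` on a `G`-invariant set `K`,
then so does the equi-tuned model `f_G(x) = (1/|G|) • ∑_{g ∈ G} g⁻¹ • f (g • x)`. -/
theorem equitune_preserves_approximation {G X Y : Type*} [Group G] [Fintype G]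
    [MulAction G X] [NormedAddCommGroup Y] [InnerProductSpace ℝ Y]
    [DistribMulAction G Y] [SMulCommClass G ℝ Y]
    (hiso : ∀ (g : G) (y : Y), ‖g • y‖ = ‖y‖)
    (K : Set X) (hK : ∀ (g : G), ∀ x ∈ K, g • x ∈ K)
    (e : X → Y) (he : ∀ (g : G) (x : X), e (g • x) = g • e x)
    (ε : ℝ) (hε : 0 < ε)
    (f : X → Y) (hf : ∀ x ∈ K, ‖e x - f x‖ ≤ ε) :
    ∀ x ∈ K, ‖e x - ((Fintype.card G : ℝ))⁻¹ • ∑ g : G, g⁻¹ • f (g • x)‖ ≤ ε :=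
  equitune_preserves_approximation_general hiso K hK e he ε f hf
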